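/- Fix an integer n ≥ 3 and define q : [1, n] → ℝ by q(k) = (2n)^{-k+1} k^{k+1/2}. Then log q is convex on [1,n], with (d/dk) log q(k) < 0 at k = 1 and (d/dk) log q(k) > 0 at k = n; consequently max_{1 ≤ k ≤ n} q(k) = max{ q(1), q(n) } ≤ max{ 1, n^{3/2} / 2^{n−1} }. -/

import Mathlib

/-!
With `b = 2n`, `log q k = (1 - k) log b + (k + 1/2) log k` has second derivative
`(2k - 1) / (2k²) ≥ 0` for `k ≥ 1/2`, so it is convex, and a positive function with convex
logarithm is maximised on an interval at an endpoint. The derivative of `log q` is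
`3/2 - log 2n < 0` at `1` (as `log 6 > 3/2`) and `1 - log 2 + 1/(2n) > 0` at `n`.
Finally `q 1 = 1` and `q n = n^{3/2} / 2^{n-1}`.
-/

open Real Set Filter

noncomputable def logQ (b k : ℝ) : ℝ := (-k + 1) * log b + (k + 1 / 2) * log k

lemma log_rpow_mul_rpow_eq_logQ {b k : ℝ} (hb : 0 < b) (hk : 0 < k) :
    log (b ^ (-k + 1) * k ^ (k + 1 / 2)) = logQ b k := by
  rw [log_mul (rpow_pos_of_pos hb _).ne' (rpow_pos_of_pos hk _).ne', log_rpow hb, log_rpow hk,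
    logQ]

lemma hasDerivAt_logQ (b : ℝ) {k : ℝ} (hk : 0 < k) :
    HasDerivAt (logQ b) (log k - log b + 1 + k⁻¹ / 2) k := by
  refine ((((hasDerivAt_id k).neg.add_const 1).mul_const (log b)).add
    (((hasDerivAt_id k).add_const (1 / 2)).mul (hasDerivAt_log hk.ne'))).congr_deriv ?_
  simp only [id]
  field_simp
  ring

lemma hasDerivAt_deriv_logQ (b : ℝ) {k : ℝ} (hk : 0 < k) :
    HasDerivAt (fun k => log k - log b + 1 + k⁻¹ / 2) (k⁻¹ - (k ^ 2)⁻¹ / 2) k := by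
  refine ((((hasDerivAt_log hk.ne').sub_const (log b)).add_const 1).add
    ((hasDerivAt_inv hk.ne').div_const 2)).congr_deriv ?_
  ring

lemma convexOn_logQ (b : ℝ) : ConvexOn ℝ (Ici (1 / 2)) (logQ b) := by
  have hpos : ∀ x ∈ interior (Ici (1 / 2 : ℝ)), 0 < x := fun x hx => by
    rw [interior_Ici, mem_Ioi] at hx
    linarith
  refine convexOn_of_hasDerivWithinAt2_nonneg (convex_Ici _) ?_
    (fun x hx => (hasDerivAt_logQ b (hpos x hx)).hasDerivWithinAt)
    (fun x hx => (hasDerivAt_deriv_logQ b (hpos x hx)).hasDerivWithinAt) fun x hx => ?_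
  · exact fun x hx =>
      (hasDerivAt_logQ b (by linarith [mem_Ici.1 hx])).continuousAt.continuousWithinAt
  · have hx0 := hpos x hx
    rw [interior_Ici, mem_Ioi] at hx
    have hsecond : x⁻¹ - (x ^ 2)⁻¹ / 2 = (2 * x - 1) / (2 * x ^ 2) := by field_simp
    rw [hsecond]
    exact div_nonneg (by linarith) (by positivity)

lemma deriv_log_rpow_mul_rpow {b k : ℝ} (hb : 0 < b) (hk : 0 < k) :
    deriv (fun k => log (b ^ (-k + 1) * k ^ (k + 1 / 2))) k = log k - log b + 1 + k⁻¹ / 2 := by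
  have : (fun k => log (b ^ (-k + 1) * k ^ (k + 1 / 2))) =ᶠ[nhds k] logQ b :=
    eventually_of_mem (Ioi_mem_nhds hk) fun _ hx => log_rpow_mul_rpow_eq_logQ hb hx
  rw [this.deriv_eq, (hasDerivAt_logQ b hk).deriv]

lemma convexOn_log_rpow_mul_rpow {b : ℝ} (hb : 0 < b) :
    ConvexOn ℝ (Ici (1 / 2)) fun k => log (b ^ (-k + 1) * k ^ (k + 1 / 2)) :=
  (convexOn_logQ b).congr fun k hk =>
    (log_rpow_mul_rpow_eq_logQ hb (lt_of_lt_of_le (by norm_num) (mem_Ici.1 hk))).symm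

lemma le_max_of_convexOn_log {f : ℝ → ℝ} {a b : ℝ} (hab : a ≤ b)
    (hf : ∀ x ∈ Icc a b, 0 < f x) (hconv : ConvexOn ℝ (Icc a b) fun x => log (f x))
    {x : ℝ} (hx : x ∈ Icc a b) : f x ≤ max (f a) (f b) := by
  have ha : a ∈ Icc a b := left_mem_Icc.2 hab
  have hb : b ∈ Icc a b := right_mem_Icc.2 hab
  have := hconv.le_on_segment ha hb (z := x) (by rwa [segment_eq_Icc hab])
  rw [le_max_iff, log_le_log_iff (hf x hx) (hf a ha), log_le_log_iff (hf x hx) (hf b hb)] at this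
  exact le_max_iff.2 this

lemma mul_rpow_neg_add_one_mul_rpow {b x : ℝ} (hb : 0 < b) (hx : 0 < x) :
    (b * x) ^ (-x + 1) * x ^ (x + 1 / 2) = x ^ ((3 : ℝ) / 2) / b ^ (x - 1) := by
  rw [show -x + 1 = -(x - 1) by ring, rpow_neg (by positivity), mul_rpow hb.le hx.le,
    show x + 1 / 2 = (x - 1) + 3 / 2 by ring, rpow_add hx]
  have : x ^ (x - 1) ≠ 0 := (rpow_pos_of_pos hx _).ne'
  field_simp

lemma three_halves_lt_log_two_mul {n : ℝ} (hn : 3 ≤ n) : 3 / 2 < log (2 * n) := by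
  have h3 : log 3 ≤ log n := log_le_log (by norm_num) hn
  rw [log_mul two_ne_zero (by linarith)]
  linarith [log_two_gt_d9, log_three_gt_d9]

/-- For a fixed integer `n ≥ 3` and `q(k) = (2n)^{-k+1} k^{k+1/2}` on `[1,n]`:
`log q` is convex, its derivative is negative at `1` and positive at `n`, and
`max_{[1,n]} q = max{q(1), q(n)} ≤ max{1, n^{3/2}/2^{n-1}}`. -/
theorem stmt7 (n : ℕ) (hn : 3 ≤ n) :
    let q : ℝ → ℝ := fun k => (2 * (n : ℝ)) ^ (-k + 1) * k ^ (k + 1 / 2)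
    ConvexOn ℝ (Set.Icc (1 : ℝ) n) (fun k => Real.log (q k)) ∧
    deriv (fun k => Real.log (q k)) 1 < 0 ∧
    0 < deriv (fun k => Real.log (q k)) (n : ℝ) ∧
    (∀ k ∈ Set.Icc (1 : ℝ) (n : ℝ), q k ≤ max (q 1) (q n)) ∧
    max (q 1) (q n) ≤ max 1 ((n : ℝ) ^ ((3 : ℝ) / 2) / 2 ^ (n - 1)) := by
  intro q
  have hn3 : (3 : ℝ) ≤ n := by exact_mod_cast hn
  have hn0 : (0 : ℝ) < n := by linarith
  have hb : (0 : ℝ) < 2 * n := by positivity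
  have hconv : ConvexOn ℝ (Icc (1 : ℝ) n) fun k => log (q k) :=
    (convexOn_log_rpow_mul_rpow hb).subset
      (fun k hk => mem_Ici.2 (by linarith [hk.1])) (convex_Icc _ _)
  refine ⟨hconv, ?_, ?_, fun k hk => le_max_of_convexOn_log (by linarith)
    (fun x hx => mul_pos (rpow_pos_of_pos hb _) (rpow_pos_of_pos (by linarith [hx.1]) _))
    hconv hk, ?_⟩
  · rw [deriv_log_rpow_mul_rpow hb one_pos, log_one, inv_one]
    linarith [three_halves_lt_log_two_mul hn3]
  · rw [deriv_log_rpow_mul_rpow hb hn0, log_mul two_ne_zero hn0.ne']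
    linarith [log_two_lt_d9, inv_pos.2 hn0]
  · have hq1 : q 1 = 1 := by norm_num [q]
    have hqn : q n = (n : ℝ) ^ ((3 : ℝ) / 2) / 2 ^ (n - 1) := by
      rw [← rpow_natCast, Nat.cast_sub (by omega : 1 ≤ n), Nat.cast_one]
      exact mul_rpow_neg_add_one_mul_rpow two_pos hn0
    rw [hq1, hqn]
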